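/- Let R be a finite reduced crystallographic root system spanning a finite-dimensional real vector space V, with base Π and Weyl group W, and let γ ∈ V satisfy ⟨γ, α∨⟩ ∈ ℤ_{>0} for every α ∈ Π. Let w ∈ W with w ≠ 1, and suppose w is not of the form ∏_{α ∈ K} s_α for any nonempty subset K ⊆ Π with ⟨α, β∨⟩ = 0 for all distinct α, β ∈ K. Writing γ − wγ = Σ_{α ∈ Π} c_α(w)·α, there exists β ∈ Π with c_β(w) > ⟨γ, β∨⟩. -/

import Mathlib

/-- A root system (as in the older Mathlib): a root pairing whose roots span the ambient module. -/
structure RootSystem (ι R M N : Type*) [CommRing R] [AddCommGroup M] [Module R M]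
    [AddCommGroup N] [Module R N] extends RootPairing ι R M N where
  span_eq_top : Submodule.span R (Set.range root) = ⊤

/-- A base of a root system: a linearly independent subset of the roots such that every root
is either a nonnegative or a nonpositive integer linear combination of its elements. -/
def RootSystem.IsBaseSet {ι V N : Type*} [AddCommGroup V] [Module ℝ V]
    [AddCommGroup N] [Module ℝ N] (P : RootSystem ι ℝ V N) (b : Finset ι) : Prop :=
  (LinearIndependent ℝ fun j : b => P.root j) ∧
    ∀ i : ι, ∃ c : ι → ℤ, ((∀ j ∈ b, 0 ≤ c j) ∨ (∀ j ∈ b, c j ≤ 0)) ∧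
      P.root i = ∑ j ∈ b, c j • P.root j

/-!
Suppose `c_β ≤ ⟨γ, β∨⟩` for every simple root `β`, and let `B` be the `W`-invariant root form.
Invariance gives `B(γ + wγ, γ - wγ) = 0`, equivalently `∑_β c_β ⟨γ + wγ, β∨⟩ B(β, β) = 0`. Since
distinct simple roots pair non-positively,
`⟨γ + wγ, β∨⟩ = 2 (⟨γ, β∨⟩ - c_β) - ∑_{α ≠ β} c_α ⟨α, β∨⟩`
is a sum of non-negative terms, so on the support `K` of `c` all of them vanish: the roots of `K`
are mutually orthogonal and `c_β = ⟨γ, β∨⟩`. Hence `u = ∏_{β ∈ K} s_β` satisfies `uγ = wγ`. As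
`γ` is strictly dominant, its stabiliser in `W` is trivial (by the exchange property of simple
reflections), so `w = u`.
-/

open Finset

namespace RootPairing

section CommRing

variable {ι R M N : Type*} [CommRing R] [AddCommGroup M] [Module R M] [AddCommGroup N]
  [Module R N] (P : RootPairing ι R M N)

def reflectionGroup (b : Finset ι) : Subgroup (M ≃ₗ[R] M) :=
  Subgroup.closure {x | ∃ i ∈ b, x = P.reflection i}

def wordProd (L : List ι) : M ≃ₗ[R] M := (L.map P.reflection).prod

def wordPerm (L : List ι) : Equiv.Perm ι := (L.map P.reflectionPerm).prod

@[simp] lemma wordProd_nil : P.wordProd [] = 1 := rfl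

@[simp] lemma wordProd_cons (i : ι) (L : List ι) :
    P.wordProd (i :: L) = P.reflection i * P.wordProd L := List.prod_cons

@[simp] lemma wordProd_append (L₁ L₂ : List ι) :
    P.wordProd (L₁ ++ L₂) = P.wordProd L₁ * P.wordProd L₂ := by
  simp [wordProd]

@[simp] lemma wordProd_singleton (i : ι) : P.wordProd [i] = P.reflection i := by
  simp [wordProd]

lemma wordProd_reverse (L : List ι) : P.wordProd L.reverse = (P.wordProd L)⁻¹ := by
  simp [wordProd, List.prod_inv_reverse, List.map_reverse, Function.comp_def, reflection_inv]

lemma root_wordPerm (L : List ι) (i : ι) :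
    P.root (P.wordPerm L i) = P.wordProd L (P.root i) := by
  induction L with
  | nil => rfl
  | cons j L ih => simp [wordPerm, ← ih, root_reflectionPerm]

lemma reflection_mul_reflection (i j : ι) :
    P.reflection i * P.reflection j = P.reflection (P.reflectionPerm i j) * P.reflection i := by
  rw [reflection_reflectionPerm, mul_assoc, ← sq, reflection_sq, mul_one]

lemma wordProd_mul_reflection (L : List ι) (i : ι) :
    P.wordProd L * P.reflection i = P.reflection (P.wordPerm L i) * P.wordProd L := by
  induction L with
  | nil => simp [wordPerm]
  | cons j L ih =>
    rw [wordProd_cons, mul_assoc, ih, ← mul_assoc, reflection_mul_reflection, mul_assoc]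
    simp [wordPerm]

lemma exists_wordProd_of_mem_reflectionGroup {b : Finset ι} {w : M ≃ₗ[R] M}
    (hw : w ∈ P.reflectionGroup b) :
    ∃ L : List ι, (∀ i ∈ L, i ∈ b) ∧ w = P.wordProd L := by
  induction hw using Subgroup.closure_induction with
  | mem x hx =>
    obtain ⟨i, hi, rfl⟩ := hx
    exact ⟨[i], by simpa using hi, by simp⟩
  | one => exact ⟨[], by simp, rfl⟩
  | mul x y _ _ hx hy =>
    obtain ⟨L₁, h₁, rfl⟩ := hx
    obtain ⟨L₂, h₂, rfl⟩ := hy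
    exact ⟨L₁ ++ L₂, by simp_all [or_imp], by simp⟩
  | inv x _ hx =>
    obtain ⟨L, hL, rfl⟩ := hx
    exact ⟨L.reverse, by simpa using hL, (P.wordProd_reverse L).symm⟩

lemma noncommProd_reflection_apply (K : Finset ι)
    (horth : ∀ i ∈ K, ∀ j ∈ K, i ≠ j → P.pairing i j = 0)
    (hcomm : (K : Set ι).Pairwise fun i j => Commute (P.reflection i) (P.reflection j))
    (x : M) :
    K.noncommProd (fun i => P.reflection i) hcomm x
      = x - ∑ j ∈ K, P.toLinearMap x (P.coroot j) • P.root j := by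
  classical
  induction K using Finset.induction_on with
  | empty => simp
  | insert i K hiK ih =>
    rw [noncommProd_insert_of_notMem _ _ _ _ hiK, LinearEquiv.mul_apply,
      ih (fun j hj k hk => horth j (mem_insert_of_mem hj) k (mem_insert_of_mem hk)),
      sum_insert hiK, reflection_apply]
    have hK : P.coroot' i (∑ j ∈ K, P.toLinearMap x (P.coroot j) • P.root j) = 0 := by
      refine (map_sum _ _ _).trans (sum_eq_zero fun j hj => ?_)
      rw [map_smul, root_coroot'_eq_pairing, horth j (mem_insert_of_mem hj) i
        (mem_insert_self i K) (by rintro rfl; exact hiK hj), smul_zero]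
    rw [map_sub, hK, sub_zero]
    simp only [coroot', LinearMap.flip_apply]
    abel

lemma pairing_sum_smul_root [DecidableEq ι] {b : Finset ι} {j : ι} (hj : j ∈ b)
    (c : ι → R) :
    P.toLinearMap (∑ k ∈ b, c k • P.root k) (P.coroot j)
      = 2 * c j + ∑ k ∈ b.erase j, c k * P.pairing k j := by
  simp [map_sum, root_coroot_eq_pairing, ← add_sum_erase b _ hj, mul_comm]

lemma pairing_add_of_sub_eq_sum [DecidableEq ι] {b : Finset ι} {c : ι → R} {x y : M}
    (h : x - y = ∑ k ∈ b, c k • P.root k) {j : ι} (hj : j ∈ b) :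
    P.toLinearMap (x + y) (P.coroot j)
      = 2 * (P.toLinearMap x (P.coroot j) - c j) + ∑ k ∈ b.erase j, c k * -P.pairing k j := by
  rw [show x + y = (2 : R) • x - (x - y) by module, h, map_sub, LinearMap.sub_apply,
    P.pairing_sum_smul_root hj]
  simp only [map_smul, LinearMap.smul_apply, smul_eq_mul, mul_neg, sum_neg_distrib]
  ring

end CommRing

section Real

variable {ι V N : Type*} [AddCommGroup V] [Module ℝ V] [AddCommGroup N] [Module ℝ N]
  (P : RootPairing ι ℝ V N)

section RootForm

variable [Fintype ι]

lemma rootForm_root_self_pos (j : ι) : 0 < P.RootForm (P.root j) (P.root j) :=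
  P.rootForm_pos_of_ne_zero (Submodule.subset_span (Set.mem_range_self j)) (P.ne_zero j)

lemma two_mul_rootForm_root (x : V) (j : ι) :
    2 * P.RootForm x (P.root j)
      = P.toLinearMap x (P.coroot j) * P.RootForm (P.root j) (P.root j) := by
  have h := P.rootForm_reflection_reflection_apply j x (P.root j)
  rw [reflection_apply_self, reflection_apply] at h
  simp only [map_neg, map_sub, map_smul, LinearMap.sub_apply, LinearMap.smul_apply, smul_eq_mul,
    coroot', LinearMap.flip_apply] at h
  linarith

lemma rootForm_apply_apply_of_mem_reflectionGroup {b : Finset ι} {w : V ≃ₗ[ℝ] V}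
    (hw : w ∈ P.reflectionGroup b) (x y : V) : P.RootForm (w x) (w y) = P.RootForm x y := by
  induction hw using Subgroup.closure_induction generalizing x y with
  | mem u hu =>
    obtain ⟨i, -, rfl⟩ := hu
    exact P.rootForm_reflection_reflection_apply i x y
  | one => rfl
  | mul u v _ _ hu hv => simp only [LinearEquiv.mul_apply, hu, hv]
  | inv u _ hu => rw [← hu, LinearEquiv.coe_inv, u.apply_symm_apply, u.apply_symm_apply]

lemma mul_pairing_eq_zero_of_rootForm_eq_zero {b : Finset ι} {c : ι → ℝ}
    (hc : ∀ j ∈ b, 0 ≤ c j) {y : V} (hy : ∀ j ∈ b, 0 ≤ P.toLinearMap y (P.coroot j))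
    (h : P.RootForm y (∑ j ∈ b, c j • P.root j) = 0) :
    ∀ j ∈ b, c j * P.toLinearMap y (P.coroot j) = 0 := by
  have hterm : ∀ j ∈ b,
      0 ≤ c j * P.toLinearMap y (P.coroot j) * P.RootForm (P.root j) (P.root j) := fun j hj =>
    mul_nonneg (mul_nonneg (hc j hj) (hy j hj)) (P.rootForm_root_self_pos j).le
  have hsum :
      ∑ j ∈ b, c j * P.toLinearMap y (P.coroot j) * P.RootForm (P.root j) (P.root j) = 0 := by
    calc _ = 2 * P.RootForm y (∑ j ∈ b, c j • P.root j) := by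
          simp only [map_sum, map_smul, smul_eq_mul, mul_sum, mul_left_comm _ (c _),
            two_mul_rootForm_root, mul_assoc]
      _ = 0 := by rw [h, mul_zero]
  intro j hj
  exact (mul_eq_zero.mp ((sum_eq_zero_iff_of_nonneg hterm).mp hsum j hj)).resolve_right
    (P.rootForm_root_self_pos j).ne'

end RootForm

def IsNonneg (b : Finset ι) (x : V) : Prop :=
  ∃ c : ι → ℝ, (∀ j ∈ b, 0 ≤ c j) ∧ x = ∑ j ∈ b, c j • P.root j

variable {P} {b : Finset ι}

lemma sum_single_smul_root [DecidableEq ι] {i : ι} (hi : i ∈ b) (a : ℝ) :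
    ∑ j ∈ b, (Pi.single i a : ι → ℝ) j • P.root j = a • P.root i := by
  rw [sum_eq_single_of_mem i hi fun j _ hj => by simp [hj], Pi.single_eq_same]

lemma IsNonneg.apply_pos {x : V} (hx : P.IsNonneg b x) (hx0 : x ≠ 0) {f : Module.Dual ℝ V}
    (hf : ∀ j ∈ b, 0 < f (P.root j)) : 0 < f x := by
  obtain ⟨c, hc, rfl⟩ := hx
  obtain ⟨j, hj, hcj⟩ : ∃ j ∈ b, c j ≠ 0 := by
    by_contra! h
    exact hx0 (sum_eq_zero fun j hj => by rw [h j hj, zero_smul])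
  simp only [map_sum, map_smul, smul_eq_mul]
  exact sum_pos' (fun k hk => mul_nonneg (hc k hk) (hf k hk).le)
    ⟨j, hj, mul_pos ((hc j hj).lt_of_ne' hcj) (hf j hj)⟩

end Real

end RootPairing

namespace RootSystem.IsBaseSet

open RootPairing

variable {ι V N : Type*} [AddCommGroup V] [Module ℝ V] [AddCommGroup N] [Module ℝ N]
  {P : RootSystem ι ℝ V N} {b : Finset ι}

lemma nonneg_of_isNonneg_sum (hb : P.IsBaseSet b) {d : ι → ℝ}
    (h : P.IsNonneg b (∑ j ∈ b, d j • P.root j)) : ∀ j ∈ b, 0 ≤ d j := by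
  obtain ⟨c, hc, heq⟩ := h
  intro j hj
  rw [linearIndepOn_finset_iffₛ.mp hb.1 d c heq j hj]
  exact hc j hj

lemma nonpos_of_isNonneg_neg_sum (hb : P.IsBaseSet b) {d : ι → ℝ}
    (h : P.IsNonneg b (-∑ j ∈ b, d j • P.root j)) : ∀ j ∈ b, d j ≤ 0 := by
  have := hb.nonneg_of_isNonneg_sum (d := -d) (by simpa [neg_smul, sum_neg_distrib] using h)
  intro j hj
  simpa using this j hj

lemma isNonneg_or_isNonneg_neg (hb : P.IsBaseSet b) (m : ι) :
    P.IsNonneg b (P.root m) ∨ P.IsNonneg b (-P.root m) := by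
  obtain ⟨c, hc | hc, h⟩ := hb.2 m
  · exact .inl ⟨fun j => c j, fun j hj => by simpa using hc j hj, by
      simp [h, Int.cast_smul_eq_zsmul]⟩
  · exact .inr ⟨fun j => -c j, fun j hj => by simpa using hc j hj, by
      simp [h, Int.cast_smul_eq_zsmul, sum_neg_distrib]⟩

lemma not_isNonneg_neg_root (hb : P.IsBaseSet b) {i : ι} (hi : i ∈ b) :
    ¬ P.IsNonneg b (-P.root i) := by
  classical
  intro h
  rw [← one_smul ℝ (P.root i), ← sum_single_smul_root hi] at h
  have := hb.nonpos_of_isNonneg_neg_sum h i hi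
  norm_num at this

lemma pairing_nonpos (hb : P.IsBaseSet b) {i j : ι} (hi : i ∈ b) (hj : j ∈ b) (hij : i ≠ j) :
    P.pairing i j ≤ 0 := by
  classical
  -- the root `s_j αᵢ` has coefficient `1` at `αᵢ`, so its coefficient at `αⱼ` is non-negative
  have hroot : P.root (P.reflectionPerm j i)
      = ∑ k ∈ b, (Pi.single i 1 - Pi.single j (P.pairing i j) : ι → ℝ) k • P.root k := by
    simp [sub_smul, sum_sub_distrib, sum_single_smul_root hi, sum_single_smul_root hj,
      root_reflectionPerm, reflection_apply_root]
  rcases hb.isNonneg_or_isNonneg_neg (P.reflectionPerm j i) with h | h <;> rw [hroot] at h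
  · simpa [hij] using hb.nonneg_of_isNonneg_sum h j hj
  · have := hb.nonpos_of_isNonneg_neg_sum h i hi
    norm_num [hij] at this

lemma eq_of_isNonneg_neg_reflection (hb : P.IsBaseSet b) [P.IsReduced] {i m : ι} (hi : i ∈ b)
    (hm : P.IsNonneg b (P.root m)) (h : P.IsNonneg b (-P.reflection i (P.root m))) : m = i := by
  classical
  obtain ⟨c, hc, hcm⟩ := id hm
  have hrefl : P.reflection i (P.root m)
      = ∑ k ∈ b, (c - Pi.single i (P.pairing m i) : ι → ℝ) k • P.root k := by
    rw [reflection_apply_root, hcm]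
    simp [sub_smul, sum_sub_distrib, sum_single_smul_root hi]
  rw [hrefl] at h
  have hzero : ∀ k ∈ b, k ≠ i → c k = 0 := fun k hk hki =>
    le_antisymm (by simpa [hki] using hb.nonpos_of_isNonneg_neg_sum h k hk) (hc k hk)
  have hmi : P.root m = c i • P.root i := by
    rw [hcm, sum_eq_single_of_mem i hi fun k hk hki => by rw [hzero k hk hki, zero_smul]]
  have hdep : ¬ LinearIndependent ℝ ![P.root m, P.root i] := fun hli => by
    simpa using LinearIndependent.pair_iff.mp hli 1 (-c i) (by rw [hmi]; module)
  rcases IsReduced.eq_or_eq_neg m i hdep with h' | h'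
  · exact P.root.injective h'
  · exact (hb.not_isNonneg_neg_root hi (h' ▸ hm)).elim

lemma exists_wordProd_eq_mul_reflection (hb : P.IsBaseSet b) [P.IsReduced] {α : ι}
    (hα : α ∈ b) {L : List ι} (hL : ∀ i ∈ L, i ∈ b)
    (hneg : P.IsNonneg b (-P.wordProd L (P.root α))) :
    ∃ L' : List ι, (∀ i ∈ L', i ∈ b) ∧ L'.length < L.length ∧
      P.wordProd L * P.reflection α = P.wordProd L' := by
  induction L with
  | nil => exact (hb.not_isNonneg_neg_root hα (by simpa using hneg)).elim
  | cons i L ih =>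
    have hLb : ∀ j ∈ L, j ∈ b := fun j hj => hL j (List.mem_cons_of_mem i hj)
    rcases hb.isNonneg_or_isNonneg_neg (P.wordPerm L α) with hpos | hneg'
    · -- `s_i` sends the positive root `wordProd L α` to a negative one, so it is `αᵢ`
      have hi : P.wordPerm L α = i := hb.eq_of_isNonneg_neg_reflection
        (hL i List.mem_cons_self) hpos (by simpa [root_wordPerm] using hneg)
      refine ⟨L, hLb, by simp, ?_⟩
      rw [wordProd_cons, mul_assoc, wordProd_mul_reflection, hi, ← mul_assoc, ← sq,
        reflection_sq, one_mul]
    · obtain ⟨L', hL', hlen, heq⟩ := ih hLb (by rwa [root_wordPerm] at hneg')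
      refine ⟨i :: L', ?_, by simpa using hlen, ?_⟩
      · simpa [hL i List.mem_cons_self] using hL'
      · rw [wordProd_cons, mul_assoc, heq, wordProd_cons]

lemma eq_one_of_forall_apply_eq (hb : P.IsBaseSet b) [P.IsReduced] {f : Module.Dual ℝ V}
    (hf : ∀ j ∈ b, 0 < f (P.root j)) {w : V ≃ₗ[ℝ] V} (hw : w ∈ P.reflectionGroup b)
    (hfw : ∀ x, f (w x) = f x) : w = 1 := by
  obtain ⟨L, hL, rfl⟩ := P.exists_wordProd_of_mem_reflectionGroup hw
  clear hw
  induction hn : L.length using Nat.strong_induction_on generalizing L with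
  | _ n ih =>
  obtain rfl | ⟨L₁, α, rfl⟩ := L.eq_nil_or_concat'
  · rfl
  have hα : α ∈ b := hL α (by simp)
  have hsplit : P.wordProd (L₁ ++ [α]) = P.wordProd L₁ * P.reflection α := by simp
  have hpos : P.IsNonneg b (-P.wordProd L₁ (P.root α)) := by
    have hroot : -P.wordProd L₁ (P.root α) = P.root (P.wordPerm (L₁ ++ [α]) α) := by
      simp [root_wordPerm, hsplit, reflection_apply_self]
    rw [hroot]
    -- `f` is invariant under `w` and positive on `α`, so the root `w α` is positive
    refine (hb.isNonneg_or_isNonneg_neg _).resolve_right fun hneg => ?_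
    have := hneg.apply_pos (neg_ne_zero.mpr (P.ne_zero _)) hf
    rw [map_neg, root_wordPerm, hfw] at this
    linarith [hf α hα]
  obtain ⟨L', hL', hlen, heq⟩ :=
    hb.exists_wordProd_eq_mul_reflection hα (fun i hi => hL i (by simp [hi])) hpos
  rw [hsplit, heq] at hfw ⊢
  exact ih L'.length (by simp at hn; omega) L' hL' hfw rfl

variable [Fintype ι]

lemma eq_one_of_apply_eq_self (hb : P.IsBaseSet b) [P.IsReduced] {γ : V}
    (hγ : ∀ j ∈ b, 0 < P.toLinearMap γ (P.coroot j)) {w : V ≃ₗ[ℝ] V}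
    (hw : w ∈ P.reflectionGroup b) (hwγ : w γ = γ) : w = 1 := by
  refine hb.eq_one_of_forall_apply_eq (f := P.RootForm γ) (fun j hj => ?_) hw fun x => ?_
  · have := P.two_mul_rootForm_root γ j
    nlinarith [hγ j hj, P.rootForm_root_self_pos j]
  · conv_lhs => rw [← hwγ]
    exact P.rootForm_apply_apply_of_mem_reflectionGroup hw γ x

lemma coeff_eq_and_pairing_eq_zero_of_ne_zero [DecidableEq ι] (hb : P.IsBaseSet b) {γ : V}
    {w : V ≃ₗ[ℝ] V} (hw : w ∈ P.reflectionGroup b) {c : ι → ℝ}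
    (hc : γ - w γ = ∑ j ∈ b, c j • P.root j) (hc0 : ∀ j ∈ b, 0 ≤ c j)
    (hle : ∀ j ∈ b, c j ≤ P.toLinearMap γ (P.coroot j)) :
    (∀ j ∈ b, c j ≠ 0 → c j = P.toLinearMap γ (P.coroot j)) ∧
      ∀ i ∈ b, ∀ j ∈ b, i ≠ j → c i ≠ 0 → c j ≠ 0 → P.pairing i j = 0 := by
  have hcross : ∀ i ∈ b, ∀ k ∈ b.erase i, 0 ≤ c k * -P.pairing k i := fun i hi k hk =>
    mul_nonneg (hc0 k (mem_of_mem_erase hk))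
      (neg_nonneg.mpr (hb.pairing_nonpos (mem_of_mem_erase hk) hi (ne_of_mem_erase hk)))
  have hy0 : ∀ i ∈ b, 0 ≤ P.toLinearMap (γ + w γ) (P.coroot i) := fun i hi => by
    rw [P.pairing_add_of_sub_eq_sum hc hi]
    exact add_nonneg (by linarith [hle i hi]) (sum_nonneg (hcross i hi))
  -- `γ + wγ` and `γ - wγ` are orthogonal because `w` preserves the root form
  have hB : P.RootForm (γ + w γ) (∑ j ∈ b, c j • P.root j) = 0 := by
    have hwγ := P.rootForm_apply_apply_of_mem_reflectionGroup hw γ γ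
    have hsymm := P.rootForm_symmetric.eq γ (w γ)
    simp only [RingHom.id_apply] at hsymm
    rw [← hc]
    simp only [map_add, map_sub, LinearMap.add_apply]
    linarith
  have key : ∀ j ∈ b, c j ≠ 0 →
      c j = P.toLinearMap γ (P.coroot j) ∧ ∀ k ∈ b.erase j, c k * P.pairing k j = 0 := by
    intro j hj hcj
    have hyj := (mul_eq_zero.mp
      (P.mul_pairing_eq_zero_of_rootForm_eq_zero hc0 hy0 hB j hj)).resolve_left hcj
    rw [P.pairing_add_of_sub_eq_sum hc hj] at hyj
    obtain ⟨h₁, h₂⟩ :=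
      (add_eq_zero_iff_of_nonneg (by linarith [hle j hj]) (sum_nonneg (hcross j hj))).mp hyj
    refine ⟨by linarith, fun k hk => ?_⟩
    simpa using (sum_eq_zero_iff_of_nonneg (hcross j hj)).mp h₂ k hk
  refine ⟨fun j hj hcj => (key j hj hcj).1, fun i hi j hj hij hci hcj => ?_⟩
  exact (mul_eq_zero.mp ((key j hj hcj).2 i (mem_erase.mpr ⟨hij, hi⟩))).resolve_left hci

end RootSystem.IsBaseSet

theorem exists_coeff_gt_pairing_general
    {ι V N : Type*} [Fintype ι] [DecidableEq ι] [AddCommGroup V] [Module ℝ V]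
    [AddCommGroup N] [Module ℝ N]
    (P : RootSystem ι ℝ V N) (hred : P.IsReduced)
    (b : Finset ι) (hb : P.IsBaseSet b)
    (γ : V) (hγ : ∀ j ∈ b, ∃ z : ℤ, 0 < z ∧ (z : ℝ) = P.toLinearMap γ (P.coroot j))
    (w : V ≃ₗ[ℝ] V)
    (hw : w ∈ Subgroup.closure {x : V ≃ₗ[ℝ] V | ∃ i ∈ b, x = P.reflection i})
    (hw1 : w ≠ 1)
    (hwK : ¬ ∃ (K : Finset ι)
      (hcomm : (K : Set ι).Pairwise fun i j => Commute (P.reflection i) (P.reflection j)),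
        K.Nonempty ∧ K ⊆ b ∧ (∀ i ∈ K, ∀ j ∈ K, i ≠ j → P.pairing i j = 0) ∧
        w = K.noncommProd (fun i => P.reflection i) hcomm)
    (c : ι → ℕ) (hc : γ - w γ = ∑ j ∈ b, (c j : ℝ) • P.root j) :
    ∃ j ∈ b, P.toLinearMap γ (P.coroot j) < (c j : ℝ) := by
  have := hred
  by_contra! hle
  have hγ₀ : ∀ j ∈ b, 0 < P.toLinearMap γ (P.coroot j) := fun j hj => by
    obtain ⟨z, hz, hzγ⟩ := hγ j hj
    exact hzγ ▸ Int.cast_pos.mpr hz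
  obtain ⟨hcoeff, hpair⟩ :=
    hb.coeff_eq_and_pairing_eq_zero_of_ne_zero hw hc (fun j _ => Nat.cast_nonneg (c j)) hle
  set K := b.filter fun j => (c j : ℝ) ≠ 0
  have horth : ∀ i ∈ K, ∀ j ∈ K, i ≠ j → P.pairing i j = 0 := fun i hi j hj hij => by
    rw [mem_filter] at hi hj
    exact hpair i hi.1 j hj.1 hij hi.2 hj.2
  have hcomm : (K : Set ι).Pairwise fun i j => Commute (P.reflection i) (P.reflection j) :=
    fun i hi j hj hij => P.isOrthogonal_comm i j ⟨horth i hi j hj hij, horth j hj i hi hij.symm⟩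
  set u := K.noncommProd (fun i => P.reflection i) hcomm
  have huγ : u γ = w γ := by
    rw [P.noncommProd_reflection_apply K horth, ← sub_sub_cancel γ (w γ), hc,
      ← sum_filter_of_ne (s := b) (p := fun j => (c j : ℝ) ≠ 0) fun j _ h h' =>
        h (by rw [h', zero_smul])]
    refine congrArg _ (sum_congr rfl fun j hj => ?_)
    rw [mem_filter] at hj
    rw [hcoeff j hj.1 hj.2]
  have hu : u ∈ P.reflectionGroup b := Subgroup.noncommProd_mem _ _ fun i hi =>
    Subgroup.subset_closure ⟨i, (mem_filter.mp hi).1, rfl⟩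
  have hwu : w = u := inv_mul_eq_one.mp <|
    hb.eq_one_of_apply_eq_self hγ₀ (mul_mem (inv_mem hw) hu) (by simp [huγ])
  refine hwK ⟨K, hcomm, nonempty_iff_ne_empty.mpr fun hK => hw1 ?_, filter_subset _ _, horth, hwu⟩
  simp only [hwu, u, hK]
  exact noncommProd_empty _ _

/-- **A strict coefficient for `w` not a product of commuting simple reflections.**
Let `w ≠ 1` be an element of the Weyl group which is not a product `∏_{α ∈ K} s_α` over a
nonempty totally disconnected subset `K ⊆ Π`.  Writing `γ − wγ = Σ_{α ∈ Π} c_α(w)·α`, there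
exists `β ∈ Π` with `c_β(w) > ⟨γ, β∨⟩`. -/
theorem exists_coeff_gt_pairing
    {ι V N : Type*} [Fintype ι] [DecidableEq ι] [AddCommGroup V] [Module ℝ V]
    [FiniteDimensional ℝ V] [AddCommGroup N] [Module ℝ N]
    (P : RootSystem ι ℝ V N) (hcrys : P.IsCrystallographic) (hred : P.IsReduced)
    (b : Finset ι) (hb : P.IsBaseSet b)
    (γ : V) (hγ : ∀ j ∈ b, ∃ z : ℤ, 0 < z ∧ (z : ℝ) = P.toLinearMap γ (P.coroot j))
    (w : V ≃ₗ[ℝ] V)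
    (hw : w ∈ Subgroup.closure {x : V ≃ₗ[ℝ] V | ∃ i ∈ b, x = P.reflection i})
    (hw1 : w ≠ 1)
    (hwK : ¬ ∃ (K : Finset ι)
      (hcomm : (K : Set ι).Pairwise fun i j => Commute (P.reflection i) (P.reflection j)),
        K.Nonempty ∧ K ⊆ b ∧ (∀ i ∈ K, ∀ j ∈ K, i ≠ j → P.pairing i j = 0) ∧
        w = K.noncommProd (fun i => P.reflection i) hcomm)
    (c : ι → ℕ) (hc : γ - w γ = ∑ j ∈ b, (c j : ℝ) • P.root j) :
    ∃ j ∈ b, P.toLinearMap γ (P.coroot j) < (c j : ℝ) :=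
  exists_coeff_gt_pairing_general P hred b hb γ hγ w hw hw1 hwK c hc
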